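/- arXiv:2504.07545 — 2 statements merged into one kernel-verified Lean document; each statement's English description precedes it below -/
import Mathlib

section
/- Let v₁, v₂, v₃ be three points in ℝ² × ℝ, let τ be their convex hull, and let Δ = τ↓ be the vertical prism below τ. Let q = (u, z) ∈ Δ be any point of the prism. Then every affine function h : ℝ² → ℝ that passes weakly below q (i.e. h(u) ≤ z) also passes weakly below at least one vertex of τ: there exists i ∈ {1,2,3} with h(uᵢ) ≤ zᵢ, where vᵢ = (uᵢ, zᵢ). In particular, for any finite set H of affine functions, {h ∈ H : h passes weakly below q} ⊆ ⋃ᵢ {h ∈ H : h passes weakly below vᵢ}. -/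
/-- Observation 1 combined with the conflict-list containment of Lemma 3:
any affine function passing weakly below a point `q` of the vertical prism
below the triangle `τ = conv{v₁, v₂, v₃}` passes weakly below some vertex of
`τ`; hence for any finite set `H` of affine functions, the set of members of
`H` passing weakly below `q` is contained in the union over the vertices
`vᵢ` of the members of `H` passing weakly below `vᵢ`. -/
theorem stmt_1 (v : Fin 3 → (Fin 2 → ℝ) × ℝ)
    (τ Δ : Set ((Fin 2 → ℝ) × ℝ))
    (hτ : τ = convexHull ℝ {v 0, v 1, v 2})
    (hΔ : Δ = {p : (Fin 2 → ℝ) × ℝ | ∃ z' : ℝ, z' ≥ p.2 ∧ (p.1, z') ∈ τ})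
    (q : (Fin 2 → ℝ) × ℝ) (hq : q ∈ Δ) :
    (∀ h : (Fin 2 → ℝ) →ᵃ[ℝ] ℝ, h q.1 ≤ q.2 → ∃ i : Fin 3, h (v i).1 ≤ (v i).2)
    ∧
    (∀ H : Finset ((Fin 2 → ℝ) →ᵃ[ℝ] ℝ),
      {h : (Fin 2 → ℝ) →ᵃ[ℝ] ℝ | h ∈ H ∧ h q.1 ≤ q.2} ⊆
        ⋃ i : Fin 3, {h : (Fin 2 → ℝ) →ᵃ[ℝ] ℝ | h ∈ H ∧ h (v i).1 ≤ (v i).2}) := by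
  subst hτ hΔ
  obtain ⟨z', hz', hmem⟩ := hq
  have hrange : ({v 0, v 1, v 2} : Set ((Fin 2 → ℝ) × ℝ)) = Set.range v := by
    ext x
    constructor
    · rintro (rfl | rfl | rfl) <;> exact ⟨_, rfl⟩
    · rintro ⟨i, rfl⟩
      fin_cases i
      · exact Or.inl rfl
      · exact Or.inr (Or.inl rfl)
      · exact Or.inr (Or.inr rfl)
  rw [hrange, convexHull_range_eq_exists_affineCombination] at hmem
  obtain ⟨s, w, hw0, hw1, heq⟩ := hmem
  have key : ∀ h : (Fin 2 → ℝ) →ᵃ[ℝ] ℝ, h q.1 ≤ q.2 → ∃ i : Fin 3, h (v i).1 ≤ (v i).2 := by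
    intro h hh
    by_contra hc
    push_neg at hc
    set F : ((Fin 2 → ℝ) × ℝ) →ᵃ[ℝ] ℝ :=
      h.comp (AffineMap.fst : ((Fin 2 → ℝ) × ℝ) →ᵃ[ℝ] (Fin 2 → ℝ)) -
        (AffineMap.snd : ((Fin 2 → ℝ) × ℝ) →ᵃ[ℝ] ℝ) with hF
    have hFval : ∀ p : (Fin 2 → ℝ) × ℝ, F p = h p.1 - p.2 := fun p => rfl
    have h1 : F (q.1, z') = s.affineCombination ℝ (F ∘ v) w := by
      rw [← heq, Finset.map_affineCombination s v w hw1 F]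
    have h2 : s.affineCombination ℝ (F ∘ v) w = ∑ i ∈ s, w i • (F ∘ v) i :=
      s.affineCombination_eq_linear_combination _ _ hw1
    have hpos : ∃ i ∈ s, 0 < w i := by
      by_contra hns
      push_neg at hns
      have : ∀ i ∈ s, w i ≤ 0 := hns
      have := Finset.sum_nonpos this
      rw [hw1] at this; linarith
    obtain ⟨i0, hi0, hwi0⟩ := hpos
    have hsumpos : 0 < ∑ i ∈ s, w i • (F ∘ v) i := by
      apply Finset.sum_pos'
      · intro i hi
        have : 0 < F (v i) := by rw [hFval]; have := hc i; simp; linarith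
        exact mul_nonneg (hw0 i hi) this.le
      · refine ⟨i0, hi0, ?_⟩
        have : 0 < F (v i0) := by rw [hFval]; have := hc i0; simp; linarith
        exact mul_pos hwi0 this
    have hFq : F (q.1, z') ≤ 0 := by
      rw [hFval]; simp only
      linarith
    rw [h1, h2] at hFq
    linarith
  refine ⟨key, fun H h hh => ?_⟩
  obtain ⟨hmem, hle⟩ := hh
  obtain ⟨i, hi⟩ := key h hle
  exact Set.mem_iUnion.mpr ⟨i, hmem, hi⟩
end

section
/- Let P₁, …, P_L be closed convex subsets of ℝ³ and let s = [a, b] be a closed segment such that s ∩ frontier Pᵢ is finite for every i ∈ {1, …, L}. Let U = ℝ³ \ ⋃ᵢ frontier Pᵢ. Then the number of distinct connected components of U that intersect s is at most 2L + 1. -/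
set_option maxHeartbeats 1000000

/-- Case 1 of Lemma 7: a closed segment crossing the boundary of each of `L`
closed convex sets finitely often meets at most `2L + 1` cells of the overlay,
i.e. connected components of the complement of the union of the boundaries. -/
theorem stmt_4 (L : ℕ) (P : Fin L → Set (EuclideanSpace ℝ (Fin 3)))
    (hP_closed : ∀ i, IsClosed (P i)) (hP_convex : ∀ i, Convex ℝ (P i))
    (a b : EuclideanSpace ℝ (Fin 3))
    (s : Set (EuclideanSpace ℝ (Fin 3))) (hs : s = segment ℝ a b)
    (hfin : ∀ i, (s ∩ frontier (P i)).Finite)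
    (U : Set (EuclideanSpace ℝ (Fin 3)))
    (hU : U = (⋃ i, frontier (P i))ᶜ) :
    ((fun x => connectedComponentIn U x) '' (U ∩ s)).ncard ≤ 2 * L + 1 := by
  classical
  rcases eq_or_ne a b with hab | hab
  · -- degenerate segment: a single point
    subst hab
    have hsub : (fun x => connectedComponentIn U x) '' (U ∩ s) ⊆
        {connectedComponentIn U a} := by
      rintro _ ⟨x, ⟨hxU, hxs⟩, rfl⟩
      rw [hs, segment_same] at hxs
      simp only [Set.mem_singleton_iff] at hxs ⊢
      rw [hxs]
    calc ((fun x => connectedComponentIn U x) '' (U ∩ s)).ncard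
        ≤ ({connectedComponentIn U a} : Set (Set (EuclideanSpace ℝ (Fin 3)))).ncard :=
          Set.ncard_le_ncard hsub (Set.finite_singleton _)
      _ = 1 := Set.ncard_singleton _
      _ ≤ 2 * L + 1 := by omega
  -- main case: a ≠ b
  set f : ℝ →ᵃ[ℝ] EuclideanSpace ℝ (Fin 3) := AffineMap.lineMap a b with hf
  have hfinj : Function.Injective f := AffineMap.lineMap_injective ℝ hab
  have hfcont : Continuous f := AffineMap.lineMap_continuous
  have hsimg : s = f '' Set.Icc (0:ℝ) 1 := by
    rw [hs, segment_eq_image_lineMap]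
  -- crossing parameters
  set K : Set ℝ := {t | t ∈ Set.Icc (0:ℝ) 1 ∧ f t ∈ ⋃ i, frontier (P i)} with hK
  set Ki : Fin L → Set ℝ := fun i => {t | t ∈ Set.Icc (0:ℝ) 1 ∧ f t ∈ frontier (P i)}
    with hKi
  have hKeq : K = ⋃ i, Ki i := by
    ext t
    simp only [hK, hKi, Set.mem_setOf_eq, Set.mem_iUnion]
    tauto
  have hKifin : ∀ i, (Ki i).Finite := by
    intro i
    have hsub : Ki i ⊆ f ⁻¹' (s ∩ frontier (P i)) := by
      rintro t ⟨ht01, htF⟩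
      exact ⟨hsimg ▸ ⟨t, ht01, rfl⟩, htF⟩
    exact ((hfin i).preimage hfinj.injOn).subset hsub
  have hKfin : K.Finite := hKeq ▸ Set.finite_iUnion hKifin
  -- each Ki has at most 2 elements
  have hKi2 : ∀ i, (Ki i).ncard ≤ 2 := by
    intro i
    have hmemP : ∀ t ∈ Ki i, f t ∈ P i := fun t ht =>
      ((hP_closed i).frontier_eq ▸ ht.2).1
    have hnotint : ∀ t ∈ Ki i, f t ∉ interior (P i) := fun t ht =>
      ((hP_closed i).frontier_eq ▸ ht.2).2
    by_cases hint : ∃ u ∈ Set.Icc (0:ℝ) 1, f u ∈ interior (P i)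
    · obtain ⟨u, _, huint⟩ := hint
      have h3 : ∀ t1 ∈ Ki i, ∀ t2 ∈ Ki i, ∀ t3 ∈ Ki i, t1 < t2 → t2 < t3 → False := by
        intro t1 h1 t2 h2 t3 h3 h12 h23
        rcases lt_trichotomy t2 u with hlt | heq | hgt
        · -- t1 < t2 < u : t2 ∈ openSegment t1 u
          have hmem : f t2 ∈ openSegment ℝ (f t1) (f u) := by
            rw [← image_openSegment ℝ f t1 u]
            exact ⟨t2, by rw [openSegment_eq_Ioo (h12.trans hlt)]; exact ⟨h12, hlt⟩, rfl⟩
          exact hnotint t2 h2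
            ((hP_convex i).openSegment_closure_interior_subset_interior
              (subset_closure (hmemP t1 h1)) huint hmem)
        · exact hnotint t2 h2 (heq ▸ huint)
        · -- u < t2 < t3 : t2 ∈ openSegment u t3
          have hmem : f t2 ∈ openSegment ℝ (f u) (f t3) := by
            rw [← image_openSegment ℝ f u t3]
            exact ⟨t2, by rw [openSegment_eq_Ioo (hgt.trans h23)]; exact ⟨hgt, h23⟩, rfl⟩
          exact hnotint t2 h2
            ((hP_convex i).openSegment_interior_closure_subset_interior huint
              (subset_closure (hmemP t3 h3)) hmem)
      by_contra hcon
      push_neg at hcon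
      obtain ⟨x, hx, y, hy, z, hz, hxy, hxz, hyz⟩ :=
        (Set.two_lt_ncard (hKifin i)).mp hcon
      rcases hxy.lt_or_gt with h | h <;> rcases hxz.lt_or_gt with h' | h' <;>
        rcases hyz.lt_or_gt with h'' | h''
      all_goals first
        | exact h3 x hx y hy z hz (by linarith) (by linarith)
        | exact h3 x hx z hz y hy (by linarith) (by linarith)
        | exact h3 y hy x hx z hz (by linarith) (by linarith)
        | exact h3 y hy z hz x hx (by linarith) (by linarith)
        | exact h3 z hz x hx y hy (by linarith) (by linarith)
        | exact h3 z hz y hy x hx (by linarith) (by linarith)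
    · -- no interior point on the segment: Ki i is convex, hence a subsingleton
      push_neg at hint
      have hKieq : Ki i = Set.Icc (0:ℝ) 1 ∩ f ⁻¹' (P i) := by
        ext t
        constructor
        · rintro ⟨ht01, htF⟩
          exact ⟨ht01, ((hP_closed i).frontier_eq ▸ htF).1⟩
        · rintro ⟨ht01, htP⟩
          refine ⟨ht01, ?_⟩
          rw [(hP_closed i).frontier_eq]
          exact ⟨htP, hint t ht01⟩
      have hconv : Convex ℝ (Ki i) := by
        rw [hKieq]
        exact (convex_Icc _ _).inter ((hP_convex i).affine_preimage f)
      have hsing : (Ki i).Subsingleton := by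
        intro x hx y hy
        by_contra hne
        rcases lt_or_gt_of_ne hne with h | h
        · exact (Set.Icc_infinite h) ((hKifin i).subset (hconv.ordConnected.out hx hy))
        · exact (Set.Icc_infinite h) ((hKifin i).subset (hconv.ordConnected.out hy hx))
      calc (Ki i).ncard ≤ 1 := (Set.ncard_le_one (hKifin i)).mpr hsing
        _ ≤ 2 := by omega
  -- total number of crossings is at most 2L
  have hKcard : K.ncard ≤ 2 * L := by
    have hsub : hKfin.toFinset ⊆ Finset.univ.biUnion fun i => (hKifin i).toFinset := by
      intro t ht
      rw [Set.Finite.mem_toFinset, hKeq, Set.mem_iUnion] at ht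
      obtain ⟨i, hi⟩ := ht
      exact Finset.mem_biUnion.mpr ⟨i, Finset.mem_univ i, (hKifin i).mem_toFinset.mpr hi⟩
    calc K.ncard = hKfin.toFinset.card := Set.ncard_eq_toFinset_card K hKfin
      _ ≤ (Finset.univ.biUnion fun i => (hKifin i).toFinset).card :=
          Finset.card_le_card hsub
      _ ≤ Finset.univ.card * 2 := Finset.card_biUnion_le_card_mul _ _ 2 fun i _ => by
          rw [← Set.ncard_eq_toFinset_card (Ki i) (hKifin i)]; exact hKi2 i
      _ = 2 * L := by simp [Finset.card_univ, Nat.mul_comm]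
  -- counting function
  set c : ℝ → ℕ := fun t => (K ∩ Set.Iio t).ncard with hc
  set T : Set ℝ := {t | t ∈ Set.Icc (0:ℝ) 1 ∧ f t ∈ U} with hT
  have hUS : U ∩ s = f '' T := by
    ext x
    constructor
    · rintro ⟨hxU, hxs⟩
      rw [hsimg] at hxs
      obtain ⟨t, ht, rfl⟩ := hxs
      exact ⟨t, ⟨ht, hxU⟩, rfl⟩
    · rintro ⟨t, ⟨ht01, htU⟩, rfl⟩
      exact ⟨htU, hsimg ▸ ⟨t, ht01, rfl⟩⟩
  -- same count implies same component
  have key : ∀ t ∈ T, ∀ t' ∈ T, t ≤ t' → c t = c t' →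
      connectedComponentIn U (f t) = connectedComponentIn U (f t') := by
    intro t ht t' ht' hle hcc
    have hseg : f '' Set.Icc t t' ⊆ U := by
      rintro _ ⟨u, hu, rfl⟩
      by_contra hnu
      have huF : f u ∈ ⋃ i, frontier (P i) := by
        rw [hU] at hnu
        simpa using hnu
      have hu01 : u ∈ Set.Icc (0:ℝ) 1 :=
        ⟨ht.1.1.trans hu.1, hu.2.trans ht'.1.2⟩
      have huK : u ∈ K := ⟨hu01, huF⟩
      have htU' : f t ∉ ⋃ i, frontier (P i) := by
        have h2 := ht.2; rw [hU] at h2; simpa using h2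
      have htU'' : f t' ∉ ⋃ i, frontier (P i) := by
        have h2 := ht'.2; rw [hU] at h2; simpa using h2
      have hut : u ≠ t := fun h => htU' (h ▸ huF)
      have hut' : u ≠ t' := fun h => htU'' (h ▸ huF)
      have hlt : t < u := lt_of_le_of_ne hu.1 (Ne.symm hut)
      have hlt' : u < t' := lt_of_le_of_ne hu.2 hut'
      have hss : K ∩ Set.Iio t ⊂ K ∩ Set.Iio t' := by
        constructor
        · exact Set.inter_subset_inter_right _ (Set.Iio_subset_Iio hle)
        · intro hsub
          exact absurd ((hsub ⟨huK, hlt'⟩).2 : u < t) (not_lt.mpr hlt.le)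
      have h2 := Set.ncard_lt_ncard hss (hKfin.inter_of_left _)
      have hcc' : (K ∩ Set.Iio t).ncard = (K ∩ Set.Iio t').ncard := hcc
      omega
    have hconn : IsPreconnected (f '' Set.Icc t t') :=
      isPreconnected_Icc.image f (hfcont.continuousOn)
    have hft : f t ∈ f '' Set.Icc t t' := Set.mem_image_of_mem f ⟨le_refl t, hle⟩
    have hft' : f t' ∈ f '' Set.Icc t t' := Set.mem_image_of_mem f ⟨hle, le_refl t'⟩
    exact connectedComponentIn_eq
      (hconn.subset_connectedComponentIn hft hseg hft')
  have hcomp : ∀ t ∈ T, ∀ t' ∈ T, c t = c t' →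
      connectedComponentIn U (f t) = connectedComponentIn U (f t') := by
    intro t ht t' ht' hcc
    rcases le_total t t' with h | h
    · exact key t ht t' ht' h hcc
    · exact (key t' ht' t ht h hcc.symm).symm
  -- factor through c
  set G : ℕ → Set (EuclideanSpace ℝ (Fin 3)) := fun n =>
    if h : ∃ t, t ∈ T ∧ c t = n then connectedComponentIn U (f h.choose) else ∅ with hG
  have hfact : ∀ t ∈ T, connectedComponentIn U (f t) = G (c t) := by
    intro t ht
    have hex : ∃ t', t' ∈ T ∧ c t' = c t := ⟨t, ht, rfl⟩
    rw [hG]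
    simp only [dif_pos hex]
    exact (hcomp hex.choose hex.choose_spec.1 t ht hex.choose_spec.2).symm
  have himg : (fun x => connectedComponentIn U x) '' (U ∩ s) = G '' (c '' T) := by
    rw [hUS, Set.image_image, ← Set.image_comp]
    exact Set.image_congr hfact
  have hcT_sub : c '' T ⊆ ↑(Finset.range (2 * L + 1)) := by
    rintro _ ⟨t, _, rfl⟩
    simp only [Finset.coe_range, Set.mem_Iio]
    have h1 : c t ≤ K.ncard := Set.ncard_le_ncard Set.inter_subset_left hKfin
    omega
  have hcT_fin : (c '' T).Finite := (Finset.finite_toSet _).subset hcT_sub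
  calc ((fun x => connectedComponentIn U x) '' (U ∩ s)).ncard
      = (G '' (c '' T)).ncard := by rw [himg]
    _ ≤ (c '' T).ncard := Set.ncard_image_le hcT_fin
    _ ≤ (↑(Finset.range (2 * L + 1)) : Set ℕ).ncard :=
        Set.ncard_le_ncard hcT_sub (Finset.finite_toSet _)
    _ = 2 * L + 1 := by rw [Set.ncard_coe_finset, Finset.card_range]
end
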